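/- arXiv:1607.00531 — 3 statements merged into one kernel-verified Lean document; each statement's English description precedes it below -/
import Mathlib

section
/- Let C ⊆ ℝⁿ be convex, f : ℝⁿ → ℝ continuously differentiable with ∇f Lipschitz continuous on C with constant L_f, and let ρ, h > 0, y, z ∈ ℝⁿ. Suppose b⁺ ∈ C satisfies the first-order optimality condition ⟨∇f(b⁺) + y + ρh³(b⁺ − z), w − b⁺⟩ ≥ 0 for all w ∈ C, and let b ∈ C. Then f(b) + ⟨y, b − z⟩ + (ρh³/2)‖b − z‖² − (f(b⁺) + ⟨y, b⁺ − z⟩ + (ρh³/2)‖b⁺ − z‖²) ≥ (ρh³/2 − L_f)‖b − b⁺‖². -/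
/-!
Since `∇f` is `L_f`-Lipschitz on the convex set `C`, the mean value inequality gives
`f b ≥ f b⁺ + ⟪∇f b⁺, b - b⁺⟫ - L_f ‖b - b⁺‖²`. Adding the optimality condition tested at `w = b`
and expanding `‖b - z‖² = ‖b - b⁺‖² + 2 ⟪b⁺ - z, b - b⁺⟫ + ‖b⁺ - z‖²` leaves exactly the claim.
-/

open RealInnerProductSpace

open InnerProductSpace in
theorem Convex.abs_sub_sub_inner_le_of_lipschitzOn_gradient {E : Type*} [NormedAddCommGroup E]
    [InnerProductSpace ℝ E] [CompleteSpace E] {C : Set E} (hC : Convex ℝ C) {f : E → ℝ}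
    {f' : E → E} (hf : ∀ x ∈ C, HasGradientAt f (f' x) x) {L : ℝ} (hL : 0 ≤ L)
    (hlip : ∀ x ∈ C, ∀ y ∈ C, ‖f' x - f' y‖ ≤ L * ‖x - y‖) {x y : E} (hx : x ∈ C) (hy : y ∈ C) :
    |f y - f x - ⟪f' x, y - x⟫| ≤ L * ‖y - x‖ ^ 2 := by
  -- Apply the mean value inequality on `C ∩ closedBall x ‖y - x‖`, where the derivative
  -- stays within `L * ‖y - x‖` of the derivative at `x`.
  set s := C ∩ Metric.closedBall x ‖y - x‖
  have hs : Convex ℝ s := hC.inter (convex_closedBall x _)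
  have hderiv : ∀ w ∈ s, HasFDerivWithinAt f (toDual ℝ E (f' w)) s w :=
    fun w hw => (hf w hw.1).hasFDerivAt.hasFDerivWithinAt
  have hbound : ∀ w ∈ s, ‖toDual ℝ E (f' w) - toDual ℝ E (f' x)‖ ≤ L * ‖y - x‖ := by
    intro w ⟨hwC, hwx⟩
    rw [← map_sub, LinearIsometryEquiv.norm_map]
    calc ‖f' w - f' x‖ ≤ L * ‖w - x‖ := hlip w hwC x hx
      _ ≤ L * ‖y - x‖ := by gcongr; rwa [← dist_eq_norm]
  have hmvt := hs.norm_image_sub_le_of_norm_hasFDerivWithin_le' hderiv hbound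
    ⟨hx, Metric.mem_closedBall_self (norm_nonneg _)⟩
    ⟨hy, by rw [Metric.mem_closedBall, dist_eq_norm]⟩
  rw [toDual_apply_apply, Real.norm_eq_abs] at hmvt
  linarith

theorem stmt3_general {n : ℕ} (C : Set (EuclideanSpace ℝ (Fin n))) (hC : Convex ℝ C)
    (f : EuclideanSpace ℝ (Fin n) → ℝ) (f' : EuclideanSpace ℝ (Fin n) → EuclideanSpace ℝ (Fin n))
    (hf : ∀ x, HasGradientAt f (f' x) x)
    (Lf : ℝ) (hLf : 0 ≤ Lf)
    (hlip : ∀ x ∈ C, ∀ y ∈ C, ‖f' x - f' y‖ ≤ Lf * ‖x - y‖)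
    (ρ h : ℝ)
    (y z bp : EuclideanSpace ℝ (Fin n)) (hbp : bp ∈ C)
    (hopt : ∀ w ∈ C, 0 ≤ ⟪f' bp + y + (ρ * h ^ 3) • (bp - z), w - bp⟫)
    (b : EuclideanSpace ℝ (Fin n)) (hbC : b ∈ C) :
    (ρ * h ^ 3 / 2 - Lf) * ‖b - bp‖ ^ 2 ≤
      (f b + ⟪y, b - z⟫ + ρ * h ^ 3 / 2 * ‖b - z‖ ^ 2) -
        (f bp + ⟪y, bp - z⟫ + ρ * h ^ 3 / 2 * ‖bp - z‖ ^ 2) := by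
  have hdescent := hC.abs_sub_sub_inner_le_of_lipschitzOn_gradient (fun x _ => hf x) hLf hlip
    hbp hbC
  have hoptb := hopt b hbC
  rw [inner_add_left, inner_add_left, real_inner_smul_left] at hoptb
  have hsq : ‖b - z‖ ^ 2 = ‖b - bp‖ ^ 2 + 2 * ⟪bp - z, b - bp⟫ + ‖bp - z‖ ^ 2 := by
    rw [show b - z = (b - bp) + (bp - z) by abel, norm_add_sq_real, real_inner_comm]
  have hy : ⟪y, b - z⟫ = ⟪y, b - bp⟫ + ⟪y, bp - z⟫ := by
    rw [← inner_add_right, sub_add_sub_cancel]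
  rw [hsq, hy]
  linarith [neg_abs_le (f b - f bp - ⟪f' bp, b - bp⟫)]

theorem stmt3 {n : ℕ} (C : Set (EuclideanSpace ℝ (Fin n))) (hC : Convex ℝ C)
    (f : EuclideanSpace ℝ (Fin n) → ℝ) (f' : EuclideanSpace ℝ (Fin n) → EuclideanSpace ℝ (Fin n))
    (hf : ∀ x, HasGradientAt f (f' x) x)
    (Lf : ℝ) (hLf : 0 ≤ Lf)
    (hlip : ∀ x ∈ C, ∀ y ∈ C, ‖f' x - f' y‖ ≤ Lf * ‖x - y‖)
    (ρ h : ℝ) (hρ : 0 < ρ) (hh : 0 < h)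
    (y z bp : EuclideanSpace ℝ (Fin n)) (hbp : bp ∈ C)
    (hopt : ∀ w ∈ C, 0 ≤ ⟪f' bp + y + (ρ * h ^ 3) • (bp - z), w - bp⟫)
    (b : EuclideanSpace ℝ (Fin n)) (hbC : b ∈ C) :
    (ρ * h ^ 3 / 2 - Lf) * ‖b - bp‖ ^ 2 ≤
      (f b + ⟪y, b - z⟫ + ρ * h ^ 3 / 2 * ‖b - z‖ ^ 2) -
        (f bp + ⟪y, bp - z⟫ + ρ * h ^ 3 / 2 * ‖bp - z‖ ^ 2) :=
  stmt3_general C hC f f' hf Lf hLf hlip ρ h y z bp hbp hopt b hbC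
end

section
/- Let g : ℝⁿ → ℝ be convex and differentiable, ρ, h > 0, and b, y ∈ ℝⁿ. If z⁺ satisfies ∇g(z⁺) = y + ρh³(b − z⁺), then for every z ∈ ℝⁿ: g(z) − ⟨y, z⟩ + (ρh³/2)‖b − z‖² − (g(z⁺) − ⟨y, z⁺⟩ + (ρh³/2)‖b − z⁺‖²) ≥ (ρh³/2)‖z − z⁺‖². -/
open RealInnerProductSpace Set AffineMap

/-- Restricting `f` to the line through `x` and `y` reduces this to the one-variable slope
inequality. -/
theorem ConvexOn.add_fderiv_sub_le {E : Type*} [NormedAddCommGroup E] [NormedSpace ℝ E]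
    {f : E → ℝ} {f' : E →L[ℝ] ℝ} {s : Set E} {x y : E}
    (hf : ConvexOn ℝ s f) (hx : x ∈ s) (hy : y ∈ s) (hf' : HasFDerivAt f f' x) :
    f x + f' (y - x) ≤ f y := by
  have hline : ConvexOn ℝ (lineMap (k := ℝ) x y ⁻¹' s) (f ∘ lineMap x y) := hf.comp_affineMap _
  have hderiv : HasDerivAt (f ∘ lineMap (k := ℝ) x y) (f' (y - x)) 0 := by
    rw [← lineMap_apply_zero (k := ℝ) x y] at hf'
    exact hf'.comp_hasDerivAt 0 hasDerivAt_lineMap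
  have hslope := hline.le_slope_of_hasDerivWithinAt (x := (0 : ℝ)) (y := 1)
    (by simpa using hx) (by simpa using hy) one_pos hderiv.hasDerivWithinAt
  simp only [slope_def_field, Function.comp_apply, lineMap_apply_zero, lineMap_apply_one,
    sub_zero, div_one] at hslope
  linarith

theorem ConvexOn.add_inner_sub_le {F : Type*} [NormedAddCommGroup F] [InnerProductSpace ℝ F]
    [CompleteSpace F] {f : F → ℝ} {f' : F} {s : Set F} {x y : F}
    (hf : ConvexOn ℝ s f) (hx : x ∈ s) (hy : y ∈ s) (hf' : HasGradientAt f f' x) :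
    f x + ⟪f', y - x⟫ ≤ f y :=
  hf.add_fderiv_sub_le hx hy hf'.hasFDerivAt

theorem stmt4_general {n : ℕ} (g : EuclideanSpace ℝ (Fin n) → ℝ)
    (g' : EuclideanSpace ℝ (Fin n) → EuclideanSpace ℝ (Fin n))
    (hg : ∀ x, HasGradientAt g (g' x) x)
    (hconv : ConvexOn ℝ Set.univ g)
    (ρ h : ℝ)
    (b y zp : EuclideanSpace ℝ (Fin n))
    (hopt : g' zp = y + (ρ * h ^ 3) • (b - zp))
    (z : EuclideanSpace ℝ (Fin n)) :
    ρ * h ^ 3 / 2 * ‖z - zp‖ ^ 2 ≤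
      (g z - ⟪y, z⟫ + ρ * h ^ 3 / 2 * ‖b - z‖ ^ 2) -
        (g zp - ⟪y, zp⟫ + ρ * h ^ 3 / 2 * ‖b - zp‖ ^ 2) := by
  have htangent := hconv.add_inner_sub_le (mem_univ zp) (mem_univ z) (hg zp)
  rw [hopt, inner_add_left, real_inner_smul_left, inner_sub_right] at htangent
  have hnorm : ‖b - z‖ ^ 2 = ‖b - zp‖ ^ 2 - 2 * ⟪b - zp, z - zp⟫ + ‖z - zp‖ ^ 2 := by
    rw [show b - z = (b - zp) - (z - zp) by abel, norm_sub_sq_real]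
  -- the gap between the two sides is exactly `g z - g zp - ⟪g' zp, z - zp⟫`
  linear_combination htangent - ρ * h ^ 3 / 2 * hnorm

theorem stmt4 {n : ℕ} (g : EuclideanSpace ℝ (Fin n) → ℝ)
    (g' : EuclideanSpace ℝ (Fin n) → EuclideanSpace ℝ (Fin n))
    (hg : ∀ x, HasGradientAt g (g' x) x)
    (hconv : ConvexOn ℝ Set.univ g)
    (ρ h : ℝ) (hρ : 0 < ρ) (hh : 0 < h)
    (b y zp : EuclideanSpace ℝ (Fin n))
    (hopt : g' zp = y + (ρ * h ^ 3) • (b - zp))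
    (z : EuclideanSpace ℝ (Fin n)) :
    ρ * h ^ 3 / 2 * ‖z - zp‖ ^ 2 ≤
      (g z - ⟪y, z⟫ + ρ * h ^ 3 / 2 * ‖b - z‖ ^ 2) -
        (g zp - ⟪y, zp⟫ + ρ * h ^ 3 / 2 * ‖b - zp‖ ^ 2) :=
  stmt4_general g g' hg hconv ρ h b y zp hopt z
end

section
/- Let J : ℝⁿ → ℝ be continuously differentiable and suppose there exist 0 < M₁ ≤ M₂ such that M₁‖x‖² ≤ xᵀH(b)x ≤ M₂‖x‖² for all x ∈ ℝⁿ and all b in a sublevel set, where H(b) is a symmetric approximation to the Hessian. If the search direction d satisfies the inexactness condition ‖∇J(b) + H(b)d‖ ≤ η‖∇J(b)‖ with 0 < η < M₁/M₂, then cos θ = −⟨∇J(b), d⟩/(‖∇J(b)‖·‖d‖) ≥ (M₁ − ηM₂)/((1+η)M₂) > 0; in particular d is a descent direction. -/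
/-!
Write the gradient as `g = H c`. Symmetry of `H` turns the descent quantity into
`-⟪g, d⟫ = ⟪c, H c⟫ - ⟪c, g + H d⟫`. Cauchy–Schwarz for the form `⟪x, H y⟫` gives
`‖g‖² ≤ M₂ ⟪c, H c⟫`, while coercivity gives `M₁ ‖c‖ ≤ ‖g‖`, so the forcing condition bounds the
second term by `η ‖g‖² / M₁`. Hence `-⟪g, d⟫ ≥ (M₁ - η M₂) ‖g‖² / (M₁ M₂)`, and coercivity once
more gives `M₁ ‖d‖ ≤ ‖H d‖ ≤ (1 + η) ‖g‖`.
-/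

open RealInnerProductSpace

namespace LinearMap

variable {E : Type*} [NormedAddCommGroup E] [InnerProductSpace ℝ E] {T : E →ₗ[ℝ] E}

theorem mul_norm_le_norm_apply_of_mul_sq_le_inner {m : ℝ} {x : E}
    (h : m * ‖x‖ ^ 2 ≤ ⟪x, T x⟫) : m * ‖x‖ ≤ ‖T x‖ := by
  rcases (norm_nonneg x).eq_or_lt with hx | hx
  · simp [← hx]
  · refine le_of_mul_le_mul_left ?_ hx
    calc ‖x‖ * (m * ‖x‖) = m * ‖x‖ ^ 2 := by ring
      _ ≤ ⟪x, T x⟫ := h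
      _ ≤ ‖x‖ * ‖T x‖ := real_inner_le_norm x (T x)

theorem surjective_of_mul_sq_le_inner [FiniteDimensional ℝ E] {m : ℝ} (hm : 0 < m)
    (h : ∀ x, m * ‖x‖ ^ 2 ≤ ⟪x, T x⟫) : Function.Surjective T := by
  refine injective_iff_surjective.mp <| (injective_iff_map_eq_zero T).mpr fun x hx => ?_
  have := mul_norm_le_norm_apply_of_mul_sq_le_inner (h x)
  rw [hx, norm_zero] at this
  exact norm_le_zero_iff.mp <| nonpos_of_mul_nonpos_right this hm

theorem IsSymmetric.norm_apply_sq_le (hT : T.IsSymmetric) {M : ℝ} (hpos : ∀ x, 0 ≤ ⟪x, T x⟫)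
    (hub : ∀ x, ⟪x, T x⟫ ≤ M * ‖x‖ ^ 2) (x : E) : ‖T x‖ ^ 2 ≤ M * ⟪x, T x⟫ := by
  rcases eq_or_ne (T x) 0 with hx | hx
  · simp [hx]
  have cs := BilinForm.apply_mul_apply_le_of_forall_zero_le ((innerₗ E).compl₂ T) hpos x (T x)
  simp only [compl₂_apply, innerₗ_apply_apply] at cs
  rw [← hT x (T x), real_inner_self_eq_norm_sq] at cs
  refine le_of_mul_le_mul_right ?_ (by positivity : 0 < ‖T x‖ ^ 2)
  calc ‖T x‖ ^ 2 * ‖T x‖ ^ 2 ≤ ⟪x, T x⟫ * ⟪T x, T (T x)⟫ := cs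
    _ ≤ ⟪x, T x⟫ * (M * ‖T x‖ ^ 2) := mul_le_mul_of_nonneg_left (hub _) (hpos x)
    _ = M * ⟪x, T x⟫ * ‖T x‖ ^ 2 := by ring

theorem IsSymmetric.mul_sq_norm_le_neg_inner_of_norm_add_apply_le [FiniteDimensional ℝ E]
    (hT : T.IsSymmetric) {M₁ M₂ η : ℝ} (hM₁ : 0 < M₁) (hM₂ : 0 ≤ M₂)
    (hlb : ∀ x, M₁ * ‖x‖ ^ 2 ≤ ⟪x, T x⟫) (hub : ∀ x, ⟪x, T x⟫ ≤ M₂ * ‖x‖ ^ 2) {g d : E}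
    (hres : ‖g + T d‖ ≤ η * ‖g‖) : (M₁ - η * M₂) * ‖g‖ ^ 2 ≤ M₁ * M₂ * -⟪g, d⟫ := by
  obtain ⟨c, rfl⟩ := surjective_of_mul_sq_le_inner hM₁ hlb g
  have hpos (x : E) : 0 ≤ ⟪x, T x⟫ := (by positivity : 0 ≤ M₁ * ‖x‖ ^ 2).trans (hlb x)
  have hsplit : ⟪T c, d⟫ = ⟪c, T c + T d⟫ - ⟪c, T c⟫ := by
    rw [hT, inner_add_right]; ring
  have hgrad : ‖T c‖ ^ 2 ≤ M₂ * ⟪c, T c⟫ := hT.norm_apply_sq_le hpos hub c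
  have hforcing : M₁ * ⟪c, T c + T d⟫ ≤ η * ‖T c‖ ^ 2 :=
    calc M₁ * ⟪c, T c + T d⟫ ≤ M₁ * ‖c‖ * ‖T c + T d‖ := by
          rw [mul_assoc]; exact mul_le_mul_of_nonneg_left (real_inner_le_norm _ _) hM₁.le
      _ ≤ ‖T c‖ * (η * ‖T c‖) :=
          mul_le_mul (mul_norm_le_norm_apply_of_mul_sq_le_inner (hlb c)) hres (norm_nonneg _)
            (norm_nonneg _)
      _ = η * ‖T c‖ ^ 2 := by ring
  rw [hsplit]
  nlinarith [mul_le_mul_of_nonneg_left hgrad hM₁.le, mul_le_mul_of_nonneg_left hforcing hM₂]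

end LinearMap

theorem stmt10_general {n : ℕ} (J : EuclideanSpace ℝ (Fin n) → ℝ)
    (b : EuclideanSpace ℝ (Fin n))
    (H : EuclideanSpace ℝ (Fin n) →L[ℝ] EuclideanSpace ℝ (Fin n))
    (hsymm : ∀ x y, ⟪H x, y⟫ = ⟪x, H y⟫)
    (M₁ M₂ : ℝ) (hM₁ : 0 < M₁) (hM : M₁ ≤ M₂)
    (hspec : ∀ x : EuclideanSpace ℝ (Fin n),
      M₁ * ‖x‖ ^ 2 ≤ ⟪x, H x⟫ ∧ ⟪x, H x⟫ ≤ M₂ * ‖x‖ ^ 2)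
    (η : ℝ) (hη0 : 0 < η) (hη : η < M₁ / M₂)
    (hgrad : gradient J b ≠ 0)
    (d : EuclideanSpace ℝ (Fin n))
    (hinexact : ‖gradient J b + H d‖ ≤ η * ‖gradient J b‖) :
    (M₁ - η * M₂) / ((1 + η) * M₂) ≤
        -⟪gradient J b, d⟫ / (‖gradient J b‖ * ‖d‖) ∧
      0 < (M₁ - η * M₂) / ((1 + η) * M₂) ∧
      ⟪gradient J b, d⟫ < 0 := by
  set g := gradient J b
  have hM₂ : 0 < M₂ := hM₁.trans_le hM
  have hgap : 0 < M₁ - η * M₂ := by rw [lt_div_iff₀ hM₂] at hη; linarith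
  have hg : 0 < ‖g‖ := norm_pos_iff.mpr hgrad
  have hdescent : (M₁ - η * M₂) * ‖g‖ ^ 2 ≤ M₁ * M₂ * -⟪g, d⟫ :=
    LinearMap.IsSymmetric.mul_sq_norm_le_neg_inner_of_norm_add_apply_le (T := H.toLinearMap)
      hsymm hM₁ hM₂.le (fun x => (hspec x).1) (fun x => (hspec x).2) hinexact
  have hd : M₁ * ‖d‖ ≤ (1 + η) * ‖g‖ :=
    calc M₁ * ‖d‖ ≤ ‖H d‖ := H.toLinearMap.mul_norm_le_norm_apply_of_mul_sq_le_inner (hspec d).1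
      _ = ‖(g + H d) - g‖ := by rw [add_sub_cancel_left]
      _ ≤ ‖g + H d‖ + ‖g‖ := norm_sub_le _ _
      _ ≤ (1 + η) * ‖g‖ := by linarith
  have hgd : ⟪g, d⟫ < 0 := by nlinarith [mul_pos hgap (pow_pos hg 2), mul_pos hM₁ hM₂]
  have hdpos : 0 < ‖d‖ := norm_pos_iff.mpr <| by rintro rfl; simp at hgd
  refine ⟨?_, by positivity, hgd⟩
  rw [div_le_div_iff₀ (by positivity) (by positivity)]
  refine le_of_mul_le_mul_left ?_ hM₁
  calc M₁ * ((M₁ - η * M₂) * (‖g‖ * ‖d‖)) = (M₁ - η * M₂) * ‖g‖ * (M₁ * ‖d‖) := by ring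
    _ ≤ (M₁ - η * M₂) * ‖g‖ * ((1 + η) * ‖g‖) := by gcongr
    _ = (1 + η) * ((M₁ - η * M₂) * ‖g‖ ^ 2) := by ring
    _ ≤ (1 + η) * (M₁ * M₂ * -⟪g, d⟫) := by gcongr
    _ = M₁ * (-⟪g, d⟫ * ((1 + η) * M₂)) := by ring

theorem stmt10 {n : ℕ} (J : EuclideanSpace ℝ (Fin n) → ℝ)
    (hJ : ContDiff ℝ 1 J)
    (b : EuclideanSpace ℝ (Fin n))
    (H : EuclideanSpace ℝ (Fin n) →L[ℝ] EuclideanSpace ℝ (Fin n))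
    (hsymm : ∀ x y, ⟪H x, y⟫ = ⟪x, H y⟫)
    (M₁ M₂ : ℝ) (hM₁ : 0 < M₁) (hM : M₁ ≤ M₂)
    (hspec : ∀ x : EuclideanSpace ℝ (Fin n),
      M₁ * ‖x‖ ^ 2 ≤ ⟪x, H x⟫ ∧ ⟪x, H x⟫ ≤ M₂ * ‖x‖ ^ 2)
    (η : ℝ) (hη0 : 0 < η) (hη : η < M₁ / M₂)
    (hgrad : gradient J b ≠ 0)
    (d : EuclideanSpace ℝ (Fin n))
    (hinexact : ‖gradient J b + H d‖ ≤ η * ‖gradient J b‖) :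
    (M₁ - η * M₂) / ((1 + η) * M₂) ≤
        -⟪gradient J b, d⟫ / (‖gradient J b‖ * ‖d‖) ∧
      0 < (M₁ - η * M₂) / ((1 + η) * M₂) ∧
      ⟪gradient J b, d⟫ < 0 :=
  stmt10_general J b H hsymm M₁ M₂ hM₁ hM hspec η hη0 hη hgrad d hinexact
end
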